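/- arXiv:2306.01165 — 2 statements merged into one kernel-verified Lean document; each statement's English description precedes it below -/
import Mathlib

section
/- Let S be a t-conorm. Every fuzzy binary relation R on a set X with at least two elements can be expressed as R = S(P, I) with P asymmetric and I symmetric, if and only if S is continuous in its first coordinate (with respect to the Euclidean topology on [0,1]). -/
structure Tconorm where
  S : unitInterval → unitInterval → unitInterval
  comm : ∀ a b, S a b = S b a
  assoc : ∀ a b c, S a (S b c) = S (S a b) c
  mono : ∀ a b c d, a ≤ c → b ≤ d → S a b ≤ S c d
  S_zero : ∀ a, S a 0 = a
  S_one : ∀ a, S a 1 = 1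

structure Tnorm where
  T : unitInterval → unitInterval → unitInterval
  comm : ∀ a b, T a b = T b a
  assoc : ∀ a b c, T a (T b c) = T (T a b) c
  mono : ∀ a b c d, a ≤ c → b ≤ d → T a b ≤ T c d
  T_one : ∀ a, T a 1 = a
  T_zero : ∀ a, T a 0 = 0

/-- A fuzzy binary relation `P` is asymmetric. -/
def FAsymm {X : Type*} (P : X → X → unitInterval) : Prop :=
  ∀ x y, 0 < P x y → P y x = 0

/-- A fuzzy binary relation `I` is symmetric. -/
def FSymm {X : Type*} (I : X → X → unitInterval) : Prop :=
  ∀ x y, I x y = I y x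

/-- `(P, I)` is a weak decomposition of `R` with respect to the t-conorm `S`. -/
def IsWeakDecomp {X : Type*} (S : Tconorm) (R P I : X → X → unitInterval) : Prop :=
  FAsymm P ∧ FSymm I ∧ (∀ x y, R x y = S.S (P x y) (I x y)) ∧
    ∀ x y, I x y = 1 → P x y = 0

/-- `(P, I)` is a strong decomposition of `R` with respect to `(T, S)`. -/
def IsStrongDecomp {X : Type*} (T : Tnorm) (S : Tconorm)
    (R P I : X → X → unitInterval) : Prop :=
  FAsymm P ∧ FSymm I ∧ (∀ x y, R x y = S.S (P x y) (I x y)) ∧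
    ∀ x y, T.T (P x y) (I x y) = 0

/-- The triplet `(R, P, I)` is a fuzzy preference (FP1–FP6). -/
def IsFuzzyPref {X : Type*} (R P I : X → X → unitInterval) : Prop :=
  (∀ x y, 0 < P x y → P y x = 0) ∧
  (∀ x y, I x y = I y x) ∧
  (∀ x y, P x y ≤ R x y) ∧
  (∀ x y, R y x < R x y ↔ 0 < P x y) ∧
  (∀ x y, P x y = 0 → R x y = I x y) ∧
  (∀ x y z w, I x y ≤ I z w → P x y ≤ P z w → R x y ≤ R z w)


/-!
For fixed `b`, the map `a ↦ S(a, b)` is monotone and runs from `b` to `1`, so it is continuous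
exactly when it attains every value of `[b, 1]`: a monotone map whose range is an interval has no
jumps, and conversely the intermediate value theorem applies.

Solvability of `S(a, R(y, x)) = R(x, y)` whenever `R(y, x) ≤ R(x, y)` decomposes `R` with
`I = min(R, Rᵀ)` and `P(x, y)` such a solution (or `0`). Conversely, decompose a relation with
`R(x, y) = r ≥ b = R(y, x)`: either `P(y, x) = 0` and `a = P(x, y)` solves `S(a, b) = r`, or
`P(x, y) = 0` and `r = I(x, y) = I(y, x) ≤ S(P(y, x), I(y, x)) = b`.
-/

open Set

theorem Monotone.continuous_of_ordConnected_range {α β : Type*} [LinearOrder α]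
    [TopologicalSpace α] [OrderTopology α] [LinearOrder β] [TopologicalSpace β]
    [OrderTopology β] [DenselyOrdered β] {f : α → β} (hf : Monotone f)
    (hrange : (range f).OrdConnected) : Continuous f :=
  continuous_subtype_val.comp <|
    (show Monotone (rangeFactorization f) from fun _ _ h => hf h).continuous_of_surjective
      rangeFactorization_surjective

namespace Tconorm

variable (S : Tconorm)

theorem zero_S (a : unitInterval) : S.S 0 a = a := by
  rw [S.comm, S.S_zero]

theorem one_S (a : unitInterval) : S.S 1 a = 1 := by
  rw [S.comm, S.S_one]

theorem right_le_S (a b : unitInterval) : b ≤ S.S a b :=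
  calc b = S.S 0 b := (S.zero_S b).symm
    _ ≤ S.S a b := S.mono _ _ _ _ unitInterval.nonneg' le_rfl

theorem monotone_S_left (b : unitInterval) : Monotone fun a => S.S a b :=
  fun _ _ h => S.mono _ _ _ _ h le_rfl

theorem range_S_left_subset_Ici (b : unitInterval) : range (fun a => S.S a b) ⊆ Ici b := by
  rintro _ ⟨a, rfl⟩
  exact S.right_le_S a b

theorem continuous_S_left_of_forall_exists {b : unitInterval}
    (hsolve : ∀ r, b ≤ r → ∃ a, S.S a b = r) : Continuous fun a => S.S a b := by
  refine (S.monotone_S_left b).continuous_of_ordConnected_range ?_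
  rw [(S.range_S_left_subset_Ici b).antisymm hsolve]
  exact ordConnected_Ici

theorem exists_S_eq_of_continuous {b r : unitInterval} (hcont : Continuous fun a => S.S a b)
    (hbr : b ≤ r) : ∃ a, S.S a b = r :=
  intermediate_value_univ 0 1 hcont
    ⟨(S.zero_S b).symm ▸ hbr, (S.one_S b).symm ▸ unitInterval.le_one'⟩

def IsDecomp {X : Type*} (R P I : X → X → unitInterval) : Prop :=
  FAsymm P ∧ FSymm I ∧ ∀ x y, R x y = S.S (P x y) (I x y)

variable {S}

theorem IsDecomp.exists_S_eq {X : Type*} {R P I : X → X → unitInterval}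
    (h : S.IsDecomp R P I) {x y : X} (hle : R y x ≤ R x y) : ∃ a, S.S a (R y x) = R x y := by
  obtain ⟨hP, hI, hR⟩ := h
  rcases (unitInterval.nonneg' : 0 ≤ P y x).eq_or_lt with hPyx | hPyx
  · refine ⟨P x y, ?_⟩
    rw [hR y x, ← hPyx, zero_S, ← hI, hR x y]
  · refine ⟨0, (S.zero_S _).trans (hle.antisymm ?_)⟩
    calc R x y = I y x := by rw [hR x y, hP y x hPyx, zero_S, hI]
      _ ≤ R y x := hR y x ▸ S.right_le_S _ _

theorem isDecomp_of_forall_exists (hsolve : ∀ b r, b ≤ r → ∃ a, S.S a b = r) {X : Type*}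
    (R : X → X → unitInterval) :
    ∃ P I, S.IsDecomp R P I := by
  classical
  choose solution hsolution using hsolve
  refine ⟨fun x y => if h : R y x < R x y then solution _ _ h.le else 0,
    fun x y => min (R x y) (R y x), fun x y hxy => ?_, fun x y => min_comm _ _, fun x y => ?_⟩
  · have hlt : R y x < R x y := by
      by_contra hge
      simp [hge] at hxy
    simp [hlt.not_gt]
  · by_cases hlt : R y x < R x y
    · simp only [hlt, dif_pos, min_eq_right hlt.le, hsolution]
    · simp only [hlt, dif_neg, not_false_eq_true, min_eq_left (not_lt.1 hlt), zero_S]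

end Tconorm

/-- Every fuzzy binary relation on a set with at least two elements can be written as
`S(P, I)` with `P` asymmetric and `I` symmetric iff `S` is continuous in the first
coordinate. -/
theorem decomposable_iff_continuous_first {X : Type*} (hX : ∃ x y : X, x ≠ y)
    (S : Tconorm) :
    (∀ R : X → X → unitInterval, ∃ P I : X → X → unitInterval,
        FAsymm P ∧ FSymm I ∧ ∀ x y, R x y = S.S (P x y) (I x y)) ↔
    (∀ b, Continuous fun a => S.S a b) := by
  classical
  obtain ⟨x, y, hxy⟩ := hX
  constructor
  · intro hdec b
    refine S.continuous_S_left_of_forall_exists fun r hbr => ?_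
    obtain ⟨P, I, hdecomp⟩ := hdec fun u _ => if u = x then r else b
    simpa [hxy.symm] using
      Tconorm.IsDecomp.exists_S_eq hdecomp (x := x) (y := y) (by simpa [hxy.symm] using hbr)
  · exact fun hcont => Tconorm.isDecomp_of_forall_exists fun b r =>
      S.exists_S_eq_of_continuous (hcont b)
end

section
/- Let R be a fuzzy binary relation on a set X. There exists at most one weak decomposition (P,I) of R with respect to the maximum t-conorm S_max such that (R,P,I) is a fuzzy preference; i.e., if (P,I) and (P',I') are weak decompositions of R with respect to max and both (R,P,I) and (R,P',I') satisfy FP1–FP6, then P = P' and I = I'. -/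
/-- `(P, I)` is a weak decomposition of `R` with respect to the maximum t-conorm. -/
def IsWeakDecompMax {X : Type*} (R P I : X → X → unitInterval) : Prop :=
  FAsymm P ∧ FSymm I ∧ (∀ x y, R x y = max (P x y) (I x y)) ∧
    ∀ x y, I x y = 1 → P x y = 0

lemma FAsymm.eq_zero_or_eq_zero {X : Type*} {P : X → X → unitInterval} (hP : FAsymm P)
    (x y : X) : P x y = 0 ∨ P y x = 0 := by
  by_cases h0 : P x y = 0
  · exact Or.inl h0
  · exact Or.inr (hP x y (unitInterval.pos_iff_ne_zero.2 h0))

noncomputable def strictPart {X : Type*} (R : X → X → unitInterval) (x y : X) : unitInterval :=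
  if R y x < R x y then R x y else 0

namespace IsWeakDecompMax

variable {X : Type*} {R P I : X → X → unitInterval}

theorem indiff_eq_min (h : IsWeakDecompMax R P I) (x y : X) :
    I x y = min (R x y) (R y x) := by
  obtain ⟨hasymm, hsymm, hmax, -⟩ := h
  rw [hmax, hmax, hsymm y x]
  rcases hasymm.eq_zero_or_eq_zero x y with h0 | h0 <;> simp [h0]

theorem pref_eq_strictPart (h : IsWeakDecompMax R P I)
    (hP : ∀ x y, R y x < R x y ↔ 0 < P x y) (x y : X) : P x y = strictPart R x y := by
  unfold strictPart
  split_ifs with hlt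
  · -- `R y x` is at least `I y x = I x y`, so the maximum `R x y` must be attained by `P x y`.
    have hI : I x y ≤ R y x := by rw [h.2.1 x y, h.2.2.1 y x]; exact le_max_right _ _
    rw [h.2.2.1 x y] at hlt ⊢
    rcases lt_max_iff.1 hlt with hPlt | hIlt
    · exact (max_eq_left (hI.trans hPlt.le)).symm
    · exact absurd hIlt (not_lt.2 hI)
  · exact le_antisymm (not_lt.1 (mt (hP x y).2 hlt)) unitInterval.nonneg'

end IsWeakDecompMax

/-- There is at most one weak decomposition of `R` with respect to the maximum t-conorm
whose induced triplet is a fuzzy preference. -/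
theorem max_unique_preference_decomposition {X : Type*}
    (R P I P' I' : X → X → unitInterval)
    (h : IsWeakDecompMax R P I) (h' : IsWeakDecompMax R P' I')
    (hp : IsFuzzyPref R P I) (hp' : IsFuzzyPref R P' I') :
    P = P' ∧ I = I' := by
  constructor <;> funext x y
  · rw [h.pref_eq_strictPart hp.2.2.2.1, h'.pref_eq_strictPart hp'.2.2.2.1]
  · rw [h.indiff_eq_min, h'.indiff_eq_min]
end
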